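/- In A = ℝ[X,Y]/(X²+Y²−1), the ideal I = (1+x, y) is not principal. -/

import Mathlib

open MvPolynomial

noncomputable abbrev circleRingR : Type :=
  MvPolynomial (Fin 2) ℝ ⧸
    Ideal.span {(X 0 : MvPolynomial (Fin 2) ℝ) ^ 2 + X 1 ^ 2 - 1}

noncomputable abbrev xClass : circleRingR := Ideal.Quotient.mk _ (X 0)

noncomputable abbrev yClass : circleRingR := Ideal.Quotient.mk _ (X 1)

/-!
Send `A` to the quadratic algebra `ℝ[x][y]` with `y² = 1 - x²`; a ring hom suffices, since it
maps principal ideals to principal ideals. There the norm `N(p + q y) = p² + (x² - 1) q²` is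
multiplicative and has even degree (leading coefficients of both summands are nonnegative, so
they cannot cancel). A generator `d` of `(1 + x, y)` would have `N d ∣ N(1 + x) - N y = 2 (x + 1)`,
so `N d` would be a nonzero constant and `d` a unit. But the ideal is proper: the real part of
each of its elements vanishes at `x = -1`.
-/

open scoped Polynomial

namespace Polynomial

variable {R : Type*} [CommRing R] [LinearOrder R] [IsStrictOrderedRing R]

theorem natDegree_add_of_leadingCoeff_nonneg {f g : R[X]} (hf : 0 ≤ f.leadingCoeff)
    (hg : 0 ≤ g.leadingCoeff) : (f + g).natDegree = max f.natDegree g.natDegree := by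
  rcases eq_or_ne f 0 with rfl | hf0
  · simp
  rcases eq_or_ne g 0 with rfl | hg0
  · simp
  have hsum : f.leadingCoeff + g.leadingCoeff ≠ 0 :=
    (add_pos (hf.lt_of_ne' (leadingCoeff_ne_zero.2 hf0))
      (hg.lt_of_ne' (leadingCoeff_ne_zero.2 hg0))).ne'
  apply natDegree_eq_of_degree_eq_some
  rw [degree_add_eq_of_leadingCoeff_add_ne_zero hsum, degree_eq_natDegree hf0,
    degree_eq_natDegree hg0]
  exact (WithBot.coe_max _ _).symm

theorem even_natDegree_sq_add_mul_sq {r : R[X]} (hr : 0 ≤ r.leadingCoeff)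
    (hr' : Even r.natDegree) (p q : R[X]) : Even (p ^ 2 + r * q ^ 2).natDegree := by
  have hmul : Even (r * q ^ 2).natDegree := by
    rcases eq_or_ne r 0 with rfl | hr0
    · simp
    rcases eq_or_ne q 0 with rfl | hq0
    · simp
    rw [natDegree_mul hr0 (pow_ne_zero 2 hq0), natDegree_pow]
    exact hr'.add (even_two_mul _)
  rw [natDegree_add_of_leadingCoeff_nonneg (by rw [leadingCoeff_pow]; positivity)
    (by rw [leadingCoeff_mul, leadingCoeff_pow]; positivity), natDegree_pow]
  rcases max_choice (2 * p.natDegree) (r * q ^ 2).natDegree with h | h <;> rw [h]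
  exacts [even_two_mul _, hmul]

end Polynomial

open QuadraticAlgebra

abbrev CircleAlgebra : Type := QuadraticAlgebra ℝ[X] (1 - Polynomial.X ^ 2) 0

namespace CircleAlgebra

theorem norm_eq (z : CircleAlgebra) :
    norm z = z.re ^ 2 + (Polynomial.X ^ 2 - 1) * z.im ^ 2 := by
  rw [norm_def]; ring

theorem even_natDegree_norm (z : CircleAlgebra) : Even (norm z).natDegree := by
  rw [norm_eq]
  refine Polynomial.even_natDegree_sq_add_mul_sq ?_ ?_ _ _
  · rw [Polynomial.leadingCoeff_X_pow_sub_one (by norm_num)]; norm_num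
  · rw [← Polynomial.C_1, Polynomial.natDegree_X_pow_sub_C]; exact even_two

theorem norm_omega : norm (ω : CircleAlgebra) = Polynomial.X ^ 2 - 1 := by
  rw [norm_def]; simp

theorem algebraMap_X_sq_add_omega_sq :
    algebraMap ℝ[X] CircleAlgebra Polynomial.X ^ 2 + ω ^ 2 = 1 := by
  rw [sq (ω : CircleAlgebra), omega_mul_omega_eq_algebraMap, map_zero, zero_mul, add_zero,
    ← map_pow, ← map_add]
  convert map_one (algebraMap ℝ[X] CircleAlgebra)
  ring

theorem one_notMem_span_one_add_X_omega :
    (1 : CircleAlgebra) ∉ Ideal.span {algebraMap ℝ[X] CircleAlgebra (1 + Polynomial.X), ω} := by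
  rw [Ideal.mem_span_pair]
  rintro ⟨s, t, h⟩
  have := congrArg (fun z : CircleAlgebra => z.re.eval (-1)) h
  simp at this

theorem not_isPrincipal_span_one_add_X_omega :
    ¬ (Ideal.span {algebraMap ℝ[X] CircleAlgebra (1 + Polynomial.X), ω}).IsPrincipal := by
  rintro ⟨d, hd⟩
  have hd' : Ideal.span {algebraMap ℝ[X] CircleAlgebra (1 + Polynomial.X), ω} = Ideal.span {d} :=
    hd
  have h₁ : d ∣ algebraMap ℝ[X] CircleAlgebra (1 + Polynomial.X) :=
    Ideal.mem_span_singleton.1 (hd' ▸ Ideal.subset_span (by simp))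
  have h₂ : d ∣ ω := Ideal.mem_span_singleton.1 (hd' ▸ Ideal.subset_span (by simp))
  have hN : norm d ∣ 2 * (Polynomial.X + 1) := by
    have := dvd_sub (map_dvd QuadraticAlgebra.norm h₁) (map_dvd QuadraticAlgebra.norm h₂)
    rwa [QuadraticAlgebra.norm_algebraMap, norm_omega,
      show ∀ x : ℝ[X], (1 + x) ^ 2 - (x ^ 2 - 1) = 2 * (x + 1) by intro x; ring] at this
  have hone : (2 * (Polynomial.X + 1) : ℝ[X]).natDegree = 1 := by compute_degree!
  have hlin : (2 * (Polynomial.X + 1) : ℝ[X]) ≠ 0 := fun h => by simp [h] at hone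
  have hdeg : (norm d).natDegree = 0 := by
    have hle := Polynomial.natDegree_le_of_dvd hN hlin
    obtain ⟨k, hk⟩ := even_natDegree_norm d
    omega
  have hunit : IsUnit d := isUnit_iff_norm_isUnit.2 <| Polynomial.isUnit_iff_degree_eq_zero.2 <|
    (Polynomial.degree_eq_iff_natDegree_eq (ne_zero_of_dvd_ne_zero hlin hN)).2 hdeg
  exact one_notMem_span_one_add_X_omega (hd' ▸ Ideal.mem_span_singleton.2 hunit.dvd)

end CircleAlgebra

noncomputable def circleRingR.toCircleAlgebra : circleRingR →+* CircleAlgebra :=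
  Ideal.Quotient.lift _
    (eval₂Hom (algebraMap ℝ CircleAlgebra) ![algebraMap ℝ[X] _ Polynomial.X, ω])
    fun _ ha => by
      obtain ⟨c, rfl⟩ := Ideal.mem_span_singleton'.1 ha
      simp [CircleAlgebra.algebraMap_X_sq_add_omega_sq]

theorem circleRingR.toCircleAlgebra_xClass :
    circleRingR.toCircleAlgebra xClass = algebraMap ℝ[X] CircleAlgebra Polynomial.X := by
  simp [circleRingR.toCircleAlgebra]

theorem circleRingR.toCircleAlgebra_yClass : circleRingR.toCircleAlgebra yClass = ω := by
  simp [circleRingR.toCircleAlgebra]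

theorem stmt_7 :
    ¬ (Ideal.span {1 + xClass, yClass} : Ideal circleRingR).IsPrincipal := by
  intro h
  have := h.map_ringHom circleRingR.toCircleAlgebra
  rw [Ideal.map_span, Set.image_pair, map_add, map_one, circleRingR.toCircleAlgebra_xClass,
    circleRingR.toCircleAlgebra_yClass, ← map_one (algebraMap ℝ[X] CircleAlgebra),
    ← map_add] at this
  exact CircleAlgebra.not_isPrincipal_span_one_add_X_omega this
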